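/- arXiv:1706.08244 — 3 statements merged into one kernel-verified Lean document; each statement's English description precedes it below -/
import Mathlib

section
/- Let (X₁,X₂) and (Y₁,Y₂) be independent pairs with P(X₁ ≤ x₁, X₂ ≤ x₂) = exp(-V^X(x₁,x₂)) and P(Y₁ > y₁, Y₂ > y₂) = exp(-V^Y(g(y₁), g(y₂))), all margins unit Fréchet, where g(y) = -1/log(1 - e^{-1/y}). For a ∈ (0,1), let Z_i = max(aX_i, (1-a)Y_i). Then P(Z₁ ≤ z₁, Z₂ ≤ z₂) = exp(-a V^X(z₁,z₂)) · [exp(-(1-a)/z₁) + exp(-(1-a)/z₂) - 1 + exp(-V^Y(g(z₁/(1-a)), g(z₂/(1-a))))]. -/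
open MeasureTheory Real ProbabilityTheory

/-- Bivariate distribution function of a max-mixture process. -/
theorem max_mixture_bivariate (Ω : Type*) [MeasurableSpace Ω] (μ : Measure Ω)
    [IsProbabilityMeasure μ]
    (X₁ X₂ Y₁ Y₂ : Ω → ℝ)
    (hX₁ : Measurable X₁) (hX₂ : Measurable X₂)
    (hY₁ : Measurable Y₁) (hY₂ : Measurable Y₂)
    (hindep : ProbabilityTheory.IndepFun (fun ω => (X₁ ω, X₂ ω)) (fun ω => (Y₁ ω, Y₂ ω)) μ)
    (g : ℝ → ℝ) (hg : ∀ y : ℝ, 0 < y → g y = -1 / Real.log (1 - Real.exp (-1 / y)))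
    (VX VY : ℝ → ℝ → ℝ)
    (hVXhom : ∀ t x₁ x₂ : ℝ, 0 < t → 0 < x₁ → 0 < x₂ →
      VX (t * x₁) (t * x₂) = t⁻¹ * VX x₁ x₂)
    (hXjoint : ∀ x₁ x₂ : ℝ, 0 < x₁ → 0 < x₂ →
      μ {ω | X₁ ω ≤ x₁ ∧ X₂ ω ≤ x₂} = ENNReal.ofReal (Real.exp (-(VX x₁ x₂))))
    (hYjoint : ∀ y₁ y₂ : ℝ, 0 < y₁ → 0 < y₂ →
      μ {ω | y₁ < Y₁ ω ∧ y₂ < Y₂ ω} = ENNReal.ofReal (Real.exp (-(VY (g y₁) (g y₂)))))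
    (hX₁cdf : ∀ x : ℝ, 0 < x → μ {ω | X₁ ω ≤ x} = ENNReal.ofReal (Real.exp (-1 / x)))
    (hX₂cdf : ∀ x : ℝ, 0 < x → μ {ω | X₂ ω ≤ x} = ENNReal.ofReal (Real.exp (-1 / x)))
    (hY₁cdf : ∀ y : ℝ, 0 < y → μ {ω | Y₁ ω ≤ y} = ENNReal.ofReal (Real.exp (-1 / y)))
    (hY₂cdf : ∀ y : ℝ, 0 < y → μ {ω | Y₂ ω ≤ y} = ENNReal.ofReal (Real.exp (-1 / y)))
    (a : ℝ) (ha : a ∈ Set.Ioo (0 : ℝ) 1)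
    (Z₁ Z₂ : Ω → ℝ)
    (hZ₁ : ∀ ω, Z₁ ω = max (a * X₁ ω) ((1 - a) * Y₁ ω))
    (hZ₂ : ∀ ω, Z₂ ω = max (a * X₂ ω) ((1 - a) * Y₂ ω)) :
    ∀ z₁ z₂ : ℝ, 0 < z₁ → 0 < z₂ →
      μ {ω | Z₁ ω ≤ z₁ ∧ Z₂ ω ≤ z₂} =
        ENNReal.ofReal (Real.exp (-(a * VX z₁ z₂)) *
          (Real.exp (-(1 - a) / z₁) + Real.exp (-(1 - a) / z₂) - 1 +
            Real.exp (-(VY (g (z₁ / (1 - a))) (g (z₂ / (1 - a))))))) := by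
  intro z₁ z₂ hz₁ hz₂
  obtain ⟨ha0, ha1⟩ := ha
  have ha' : 0 < 1 - a := by linarith
  have hane : a ≠ 0 := ne_of_gt ha0
  have ha'ne : (1 - a) ≠ 0 := ne_of_gt ha'
  set u₁ := z₁ / (1 - a) with hu₁def
  set u₂ := z₂ / (1 - a) with hu₂def
  have hu₁pos : 0 < u₁ := div_pos hz₁ ha'
  have hu₂pos : 0 < u₂ := div_pos hz₂ ha'
  have hx₁pos : 0 < z₁ / a := div_pos hz₁ ha0
  have hx₂pos : 0 < z₂ / a := div_pos hz₂ ha0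
  have key : ∀ x y z : ℝ, (max (a*x) ((1-a)*y) ≤ z ↔ x ≤ z/a ∧ y ≤ z/(1-a)) := by
    intro x y z
    rw [max_le_iff, le_div_iff₀ ha0, le_div_iff₀ ha', mul_comm x a, mul_comm y (1-a)]
  have hset : {ω | Z₁ ω ≤ z₁ ∧ Z₂ ω ≤ z₂} =
      ((fun ω => (X₁ ω, X₂ ω)) ⁻¹' (Set.Iic (z₁/a) ×ˢ Set.Iic (z₂/a))) ∩
      ((fun ω => (Y₁ ω, Y₂ ω)) ⁻¹' (Set.Iic u₁ ×ˢ Set.Iic u₂)) := by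
    ext ω
    simp only [hZ₁, hZ₂, Set.mem_setOf_eq, Set.mem_inter_iff, Set.mem_preimage,
      Set.mem_prod, Set.mem_Iic, key]
    tauto
  have hprod : ∀ (b c : ℝ), MeasurableSet (Set.Iic b ×ˢ Set.Iic c) :=
    fun b c => (measurableSet_Iic).prod measurableSet_Iic
  have hmul := hindep.measure_inter_preimage_eq_mul _ _ (hprod (z₁/a) (z₂/a)) (hprod u₁ u₂)
  rw [hset, hmul]
  -- X part
  have hXpre : (fun ω => (X₁ ω, X₂ ω)) ⁻¹' (Set.Iic (z₁/a) ×ˢ Set.Iic (z₂/a)) =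
      {ω | X₁ ω ≤ z₁/a ∧ X₂ ω ≤ z₂/a} := by
    ext ω; simp [Set.mem_prod]
  have hVXa : VX (z₁/a) (z₂/a) = a * VX z₁ z₂ := by
    have := hVXhom a⁻¹ z₁ z₂ (inv_pos.2 ha0) hz₁ hz₂
    rw [inv_inv] at this
    rw [div_eq_inv_mul, div_eq_inv_mul, this]
  have hXmeas : μ ((fun ω => (X₁ ω, X₂ ω)) ⁻¹' (Set.Iic (z₁/a) ×ˢ Set.Iic (z₂/a))) =
      ENNReal.ofReal (Real.exp (-(a * VX z₁ z₂))) := by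
    rw [hXpre, hXjoint _ _ hx₁pos hx₂pos, hVXa]
  -- Y part
  have hYpre : (fun ω => (Y₁ ω, Y₂ ω)) ⁻¹' (Set.Iic u₁ ×ˢ Set.Iic u₂) =
      {ω | Y₁ ω ≤ u₁} ∩ {ω | Y₂ ω ≤ u₂} := by
    ext ω; simp [Set.mem_prod]
  have hm1 : MeasurableSet {ω | Y₁ ω ≤ u₁} := measurableSet_le hY₁ measurable_const
  have hm2 : MeasurableSet {ω | Y₂ ω ≤ u₂} := measurableSet_le hY₂ measurable_const
  have hScompl : ({ω | u₁ < Y₁ ω ∧ u₂ < Y₂ ω} : Set Ω)ᶜ = {ω | Y₁ ω ≤ u₁} ∪ {ω | Y₂ ω ≤ u₂} := by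
    ext ω
    simp only [Set.mem_compl_iff, Set.mem_setOf_eq, Set.mem_union, not_and_or, not_lt]
  have hmS : MeasurableSet {ω | u₁ < Y₁ ω ∧ u₂ < Y₂ ω} :=
    (measurableSet_lt measurable_const hY₁).inter (measurableSet_lt measurable_const hY₂)
  set p1 := Real.exp (-1 / u₁) with hp1
  set p2 := Real.exp (-1 / u₂) with hp2
  set pS := Real.exp (-(VY (g u₁) (g u₂))) with hpS
  have hμ1 : μ {ω | Y₁ ω ≤ u₁} = ENNReal.ofReal p1 := hY₁cdf _ hu₁pos
  have hμ2 : μ {ω | Y₂ ω ≤ u₂} = ENNReal.ofReal p2 := hY₂cdf _ hu₂pos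
  have hμS : μ {ω | u₁ < Y₁ ω ∧ u₂ < Y₂ ω} = ENNReal.ofReal pS := hYjoint _ _ hu₁pos hu₂pos
  have hunion : μ ({ω | Y₁ ω ≤ u₁} ∪ {ω | Y₂ ω ≤ u₂}) = 1 - ENNReal.ofReal pS := by
    rw [← hScompl, measure_compl hmS (measure_ne_top μ _), hμS, measure_univ]
  have hfin : ∀ s : Set Ω, μ s ≠ ⊤ := fun s => measure_ne_top μ s
  have hIE := measure_union_add_inter ({ω | Y₁ ω ≤ u₁}) hm2 (μ := μ)
  rw [hunion, hμ1, hμ2] at hIE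
  have hpSle : pS ≤ 1 := by
    have : μ {ω | u₁ < Y₁ ω ∧ u₂ < Y₂ ω} ≤ 1 := prob_le_one
    rw [hμS] at this
    have := (ENNReal.ofReal_le_one).1 this
    exact this
  have hp1pos : 0 < p1 := Real.exp_pos _
  have hp2pos : 0 < p2 := Real.exp_pos _
  have hpSpos : 0 < pS := Real.exp_pos _
  have hYint : μ ({ω | Y₁ ω ≤ u₁} ∩ {ω | Y₂ ω ≤ u₂}) = ENNReal.ofReal (p1 + p2 - 1 + pS) := by
    have hIEr : (1 - ENNReal.ofReal pS).toReal +
        (μ ({ω | Y₁ ω ≤ u₁} ∩ {ω | Y₂ ω ≤ u₂})).toReal = p1 + p2 := by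
      rw [← ENNReal.toReal_add (by simp) (hfin _), hIE,
        ENNReal.toReal_add ENNReal.ofReal_ne_top ENNReal.ofReal_ne_top,
        ENNReal.toReal_ofReal hp1pos.le, ENNReal.toReal_ofReal hp2pos.le]
    have hsub : (1 - ENNReal.ofReal pS).toReal = 1 - pS := by
      rw [ENNReal.toReal_sub_of_le (ENNReal.ofReal_le_one.2 hpSle) (by simp)]
      simp [ENNReal.toReal_ofReal hpSpos.le]
    rw [hsub] at hIEr
    have : (μ ({ω | Y₁ ω ≤ u₁} ∩ {ω | Y₂ ω ≤ u₂})).toReal = p1 + p2 - 1 + pS := by linarith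
    rw [← ENNReal.ofReal_toReal (hfin ({ω | Y₁ ω ≤ u₁} ∩ {ω | Y₂ ω ≤ u₂})), this]
  rw [hXmeas, hYpre, hYint, ← ENNReal.ofReal_mul (Real.exp_nonneg _)]
  congr 1
  have e1 : -1 / u₁ = -(1 - a) / z₁ := by
    rw [hu₁def]; field_simp
  have e2 : -1 / u₂ = -(1 - a) / z₂ := by
    rw [hu₂def]; field_simp
  rw [hp1, hp2, hpS, e1, e2]
end

section
/- (Hoeffding's identity, nonnegative case) Let U, W be nonnegative random variables with E[U²] < ∞ and E[W²] < ∞. Then Cov(U, W) = ∫₀^∞ ∫₀^∞ [P(U ≤ u, W ≤ w) - P(U ≤ u)P(W ≤ w)] du dw = ∫₀^∞ ∫₀^∞ [P(U > u, W > w) - P(U > u)P(W > w)] du dw. -/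
/-!
The layer cake formula for `U` under the measure `W dμ` gives
`E[UW] = ∫∫ P(U > u, W > w) du dw`, while applied to `U` and `W` separately it gives
`E[U] E[W] = ∫∫ P(U > u) P(W > w) du dw`; subtracting yields the survival form. The
distribution-function form follows pointwise, because `P(A ∩ B) - P(A) P(B)` does not change
when both events are replaced by their complements.
-/

open MeasureTheory Real Set ENNReal

namespace MeasureTheory

variable {Ω : Type*} [MeasurableSpace Ω] {μ : Measure Ω}

lemma probReal_inter_sub_mul_eq_compl [IsProbabilityMeasure μ] {s t : Set Ω}
    (hs : MeasurableSet s) (ht : MeasurableSet t) :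
    μ.real (s ∩ t) - μ.real s * μ.real t = μ.real (sᶜ ∩ tᶜ) - μ.real sᶜ * μ.real tᶜ := by
  rw [← compl_union, probReal_compl_eq_one_sub (hs.union ht), probReal_compl_eq_one_sub hs,
    probReal_compl_eq_one_sub ht]
  linear_combination measureReal_union_add_inter (μ := μ) (s := s) ht

lemma integrableOn_Ioi_measureReal_lt {f : Ω → ℝ} (hf : Integrable f μ) (hf0 : 0 ≤ᵐ[μ] f) :
    IntegrableOn (fun t ↦ μ.real {ω | t < f ω}) (Ioi 0) := by
  have htail : Antitone fun t ↦ μ {ω | t < f ω} :=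
    fun _ _ hst ↦ measure_mono fun _ h ↦ hst.trans_lt h
  refine integrable_toReal_of_lintegral_ne_top htail.measurable.aemeasurable ?_
  rw [← lintegral_eq_lintegral_meas_lt μ hf0 hf.aemeasurable]
  exact hf.lintegral_lt_top.ne

variable {U W : Ω → ℝ}

lemma setLIntegral_eq_lintegral_meas_inter_lt (hW : Measurable W) (hW0 : 0 ≤ᵐ[μ] W)
    (s : Set Ω) :
    ∫⁻ ω in s, ENNReal.ofReal (W ω) ∂μ = ∫⁻ w in Ioi 0, μ (s ∩ {ω | w < W ω}) := by
  rw [lintegral_eq_lintegral_meas_lt _ (ae_restrict_of_ae hW0) hW.aemeasurable]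
  refine lintegral_congr fun w ↦ ?_
  rw [Measure.restrict_apply (measurableSet_lt measurable_const hW), inter_comm]

theorem lintegral_mul_eq_lintegral_lintegral_meas_lt_and_lt (hU : Measurable U)
    (hW : Measurable W) (hU0 : 0 ≤ᵐ[μ] U) (hW0 : 0 ≤ᵐ[μ] W) :
    ∫⁻ ω, ENNReal.ofReal (U ω * W ω) ∂μ =
      ∫⁻ u in Ioi 0, ∫⁻ w in Ioi 0, μ {ω | u < U ω ∧ w < W ω} := by
  set ν := μ.withDensity fun ω ↦ ENNReal.ofReal (W ω)
  calc ∫⁻ ω, ENNReal.ofReal (U ω * W ω) ∂μ = ∫⁻ ω, ENNReal.ofReal (U ω) ∂ν := by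
        rw [lintegral_withDensity_eq_lintegral_mul _ hW.ennreal_ofReal hU.ennreal_ofReal]
        refine lintegral_congr_ae ?_
        filter_upwards [hW0] with ω hω
        rw [Pi.mul_apply, ← ENNReal.ofReal_mul hω, mul_comm]
    _ = ∫⁻ u in Ioi 0, ν {ω | u < U ω} :=
        lintegral_eq_lintegral_meas_lt ν
          ((withDensity_absolutelyContinuous μ _).ae_le hU0) hU.aemeasurable
    _ = ∫⁻ u in Ioi 0, ∫⁻ w in Ioi 0, μ {ω | u < U ω ∧ w < W ω} := by
        refine lintegral_congr fun u ↦ ?_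
        rw [withDensity_apply _ (measurableSet_lt measurable_const hU),
          setLIntegral_eq_lintegral_meas_inter_lt hW hW0]
        rfl

theorem integral_mul_sub_integral_mul_integral_eq_integral_integral_meas_lt
    [IsFiniteMeasure μ] (hU : Measurable U) (hW : Measurable W) (hU0 : 0 ≤ᵐ[μ] U)
    (hW0 : 0 ≤ᵐ[μ] W) (hUi : Integrable U μ) (hWi : Integrable W μ)
    (hUW : Integrable (fun ω ↦ U ω * W ω) μ) :
    ∫ ω, U ω * W ω ∂μ - (∫ ω, U ω ∂μ) * ∫ ω, W ω ∂μ =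
      ∫ u in Ioi 0, ∫ w in Ioi 0,
        (μ.real {ω | u < U ω ∧ w < W ω} - μ.real {ω | u < U ω} * μ.real {ω | w < W ω}) := by
  set F : ℝ → ℝ≥0∞ := fun u ↦ ∫⁻ w in Ioi 0, μ {ω | u < U ω ∧ w < W ω}
  have hF : Measurable F := Antitone.measurable fun _ _ huv ↦
    lintegral_mono fun _ ↦ measure_mono fun _ h ↦ ⟨huv.trans_lt h.1, h.2⟩
  have hF_lt_top : ∫⁻ u in Ioi 0, F u < ∞ := by
    rw [← lintegral_mul_eq_lintegral_lintegral_meas_lt_and_lt hU hW hU0 hW0]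
    exact hUW.lintegral_lt_top
  have hmeas (u : ℝ) : Measurable fun w ↦ μ {ω | u < U ω ∧ w < W ω} :=
    Antitone.measurable fun _ _ hvw ↦ measure_mono fun _ h ↦ ⟨h.1, hvw.trans_lt h.2⟩
  have hinner (u : ℝ) : ∫ w in Ioi 0, μ.real {ω | u < U ω ∧ w < W ω} = (F u).toReal :=
    integral_toReal (hmeas u).aemeasurable (ae_of_all _ fun _ ↦ measure_lt_top _ _)
  have hjoint (u : ℝ) : IntegrableOn (fun w ↦ μ.real {ω | u < U ω ∧ w < W ω}) (Ioi 0) :=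
    (integrableOn_Ioi_measureReal_lt hWi hW0).mono' (hmeas u).ennreal_toReal.aestronglyMeasurable
      (ae_of_all _ fun _ ↦ (norm_of_nonneg measureReal_nonneg).trans_le
        (measureReal_mono fun _ h ↦ h.2))
  have hUW0 : 0 ≤ᵐ[μ] fun ω ↦ U ω * W ω := by
    filter_upwards [hU0, hW0] with ω hUω hWω using mul_nonneg hUω hWω
  calc ∫ ω, U ω * W ω ∂μ - (∫ ω, U ω ∂μ) * ∫ ω, W ω ∂μ
      = (∫⁻ u in Ioi 0, F u).toReal - (∫ ω, U ω ∂μ) * ∫ ω, W ω ∂μ := by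
        rw [integral_eq_lintegral_of_nonneg_ae hUW0 hUW.aestronglyMeasurable,
          lintegral_mul_eq_lintegral_lintegral_meas_lt_and_lt hU hW hU0 hW0]
    _ = ∫ u in Ioi 0, ((F u).toReal - μ.real {ω | u < U ω} * ∫ ω, W ω ∂μ) := by
        rw [integral_sub (integrable_toReal_of_lintegral_ne_top hF.aemeasurable hF_lt_top.ne)
            ((integrableOn_Ioi_measureReal_lt hUi hU0).mul_const _),
          integral_mul_const, integral_toReal hF.aemeasurable (ae_lt_top hF hF_lt_top.ne),
          ← hUi.integral_eq_integral_meas_lt hU0]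
    _ = ∫ u in Ioi 0, ∫ w in Ioi 0,
        (μ.real {ω | u < U ω ∧ w < W ω} - μ.real {ω | u < U ω} * μ.real {ω | w < W ω}) := by
        congr 1 with u
        rw [integral_sub (hjoint u) ((integrableOn_Ioi_measureReal_lt hWi hW0).const_mul _),
          integral_const_mul, hinner, ← hWi.integral_eq_integral_meas_lt hW0]

end MeasureTheory

/-- Hoeffding's covariance identity for nonnegative square-integrable random variables. -/
theorem hoeffding_identity (Ω : Type*) [MeasurableSpace Ω] (μ : Measure Ω)
    [IsProbabilityMeasure μ]
    (U W : Ω → ℝ) (hU : Measurable U) (hW : Measurable W)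
    (hUnonneg : ∀ ω, 0 ≤ U ω) (hWnonneg : ∀ ω, 0 ≤ W ω)
    (hU2 : MeasureTheory.MemLp U 2 μ) (hW2 : MeasureTheory.MemLp W 2 μ) :
    ((∫ ω, U ω * W ω ∂μ) - (∫ ω, U ω ∂μ) * ∫ ω, W ω ∂μ =
      ∫ u in Set.Ioi (0 : ℝ), ∫ w in Set.Ioi (0 : ℝ),
        ((μ {ω | U ω ≤ u ∧ W ω ≤ w}).toReal -
          (μ {ω | U ω ≤ u}).toReal * (μ {ω | W ω ≤ w}).toReal)) ∧
    ((∫ ω, U ω * W ω ∂μ) - (∫ ω, U ω ∂μ) * ∫ ω, W ω ∂μ =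
      ∫ u in Set.Ioi (0 : ℝ), ∫ w in Set.Ioi (0 : ℝ),
        ((μ {ω | u < U ω ∧ w < W ω}).toReal -
          (μ {ω | u < U ω}).toReal * (μ {ω | w < W ω}).toReal)) := by
  have hcov := integral_mul_sub_integral_mul_integral_eq_integral_integral_meas_lt hU hW
    (ae_of_all μ hUnonneg) (ae_of_all μ hWnonneg) (hU2.integrable one_le_two)
    (hW2.integrable one_le_two) (hU2.integrable_mul hW2)
  refine ⟨hcov.trans ?_, hcov⟩
  congr 1 with u
  congr 1 with w
  have h := probReal_inter_sub_mul_eq_compl (μ := μ)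
    (measurableSet_le hU (measurable_const (a := u)))
    (measurableSet_le hW (measurable_const (a := w)))
  simp only [compl_ofPred, not_le] at h
  exact h.symm
end

section
/- For 0 ≤ h ≤ R, f_square(h,R) = 2πh/R² - 8h²/R³ + 2h³/R⁴ is nonnegative; moreover if S, T are independent uniformly distributed points on the square [0,R]², then for 0 ≤ h ≤ R the density of ‖S - T‖ at h equals 2πh/R² - 8h²/R³ + 2h³/R⁴. -/
open MeasureTheory Real Set

namespace DistDensitySquare
open intervalIntegral


lemma myint_sqrt01 : ∫ x in (0:ℝ)..1, Real.sqrt (1 - x ^ 2) = π / 4 := by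
  have hc : Continuous fun x : ℝ => Real.sqrt (1 - x ^ 2) :=
    (continuous_const.sub (continuous_pow 2)).sqrt
  have hsplit := intervalIntegral.integral_add_adjacent_intervals
    (a := (-1:ℝ)) (b := 0) (c := 1)
    (hc.intervalIntegrable (μ := volume) _ _) (hc.intervalIntegrable (μ := volume) _ _)
  have hneg := intervalIntegral.integral_comp_neg (a := (0:ℝ)) (b := 1)
    (fun x : ℝ => Real.sqrt (1 - x ^ 2))
  simp only [neg_sq, neg_zero] at hneg
  have := integral_sqrt_one_sub_sq
  rw [← hsplit, ← hneg] at this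
  norm_num at this
  linarith

lemma myint_sqrt (h : ℝ) (hh : 0 ≤ h) :
    ∫ u in (0:ℝ)..h, Real.sqrt (h ^ 2 - u ^ 2) = π * h ^ 2 / 4 := by
  rcases eq_or_lt_of_le hh with rfl | hpos
  · simp
  · have key : ∀ u : ℝ, Real.sqrt (h ^ 2 - u ^ 2) = h * Real.sqrt (1 - (u / h) ^ 2) := by
      intro u
      rw [show h ^ 2 - u ^ 2 = h ^ 2 * (1 - (u / h) ^ 2) by field_simp,
        Real.sqrt_mul (sq_nonneg h), Real.sqrt_sq hh]
    simp_rw [key]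
    rw [intervalIntegral.integral_const_mul,
      intervalIntegral.integral_comp_div (fun x => Real.sqrt (1 - x ^ 2)) (ne_of_gt hpos)]
    norm_num [div_self (ne_of_gt hpos), myint_sqrt01]
    ring

lemma myint_xsqrt (h : ℝ) (hh : 0 ≤ h) :
    ∫ u in (0:ℝ)..h, u * Real.sqrt (h ^ 2 - u ^ 2) = h ^ 3 / 3 := by
  have hF : ∀ x ∈ Ioo (0:ℝ) h, HasDerivAt
      (fun u : ℝ => -1/3 * ((h ^ 2 - u ^ 2) * Real.sqrt (h ^ 2 - u ^ 2)))
      (x * Real.sqrt (h ^ 2 - x ^ 2)) x := by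
    intro x hx
    have hpos : 0 < h ^ 2 - x ^ 2 := by nlinarith [hx.1, hx.2]
    have hw : HasDerivAt (fun u : ℝ => h ^ 2 - u ^ 2) (-(2 * x)) x := by
      simpa using ((hasDerivAt_pow 2 x).const_sub (h ^ 2))
    have hs : HasDerivAt (fun u : ℝ => Real.sqrt (h ^ 2 - u ^ 2))
        (1 / (2 * Real.sqrt (h ^ 2 - x ^ 2)) * (-(2 * x))) x :=
      (Real.hasDerivAt_sqrt (ne_of_gt hpos)).comp x hw
    have hmul := (hw.mul hs).const_mul (-1/3 : ℝ)
    refine hmul.congr_deriv (Eq.symm ?_)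
    have hsq : Real.sqrt (h ^ 2 - x ^ 2) ^ 2 = h ^ 2 - x ^ 2 := Real.sq_sqrt hpos.le
    have hne : Real.sqrt (h ^ 2 - x ^ 2) ≠ 0 := by positivity
    field_simp
    linear_combination x * hsq
  have hcont : ContinuousOn (fun u : ℝ => -1/3 * ((h ^ 2 - u ^ 2) * Real.sqrt (h ^ 2 - u ^ 2)))
      (Icc 0 h) :=
    (continuous_const.mul ((continuous_const.sub (continuous_pow 2)).mul
      (continuous_const.sub (continuous_pow 2)).sqrt)).continuousOn
  have hint : IntervalIntegrable (fun u : ℝ => u * Real.sqrt (h ^ 2 - u ^ 2)) volume 0 h :=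
    (continuous_id.mul (continuous_const.sub (continuous_pow 2)).sqrt).intervalIntegrable _ _
  have := intervalIntegral.integral_eq_sub_of_hasDerivAt_of_le hh hcont hF hint
  rw [this]
  have h0 : Real.sqrt (h ^ 2 - h ^ 2) = 0 := by simp
  have h1 : Real.sqrt (h ^ 2 - 0 ^ 2) = h := by simpa using Real.sqrt_sq hh
  rw [h0, h1]; ring

noncomputable def gfun (R h u : ℝ) : ℝ :=
  2 * R * Real.sqrt (h ^ 2 - u ^ 2) - max (h ^ 2 - u ^ 2) 0

lemma gfun_cont (R h : ℝ) : Continuous (gfun R h) := by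
  unfold gfun
  exact (continuous_const.mul (continuous_const.sub (continuous_pow 2)).sqrt).sub
    ((continuous_const.sub (continuous_pow 2)).max continuous_const)

lemma gfun_even (R h u : ℝ) : gfun R h (-u) = gfun R h u := by simp [gfun]

lemma gfun_zero (R h u : ℝ) (hu : h ^ 2 ≤ u ^ 2) : gfun R h u = 0 := by
  unfold gfun
  rw [Real.sqrt_eq_zero'.mpr (by linarith), max_eq_right (by linarith)]
  ring

lemma gfun_nonneg (R h u : ℝ) (hh : 0 ≤ h) (hR : h ≤ R) : 0 ≤ gfun R h u := by
  unfold gfun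
  rcases le_or_gt (h ^ 2 - u ^ 2) 0 with hc | hc
  · rw [Real.sqrt_eq_zero'.mpr hc, max_eq_right hc]; simp
  · rw [max_eq_left hc.le]
    have hs : Real.sqrt (h ^ 2 - u ^ 2) ^ 2 = h ^ 2 - u ^ 2 := Real.sq_sqrt hc.le
    have hsle : Real.sqrt (h ^ 2 - u ^ 2) ≤ R := by
      calc Real.sqrt (h ^ 2 - u ^ 2) ≤ Real.sqrt (h ^ 2) := by
            apply Real.sqrt_le_sqrt; nlinarith
        _ = h := by rw [Real.sqrt_sq hh]
        _ ≤ R := hR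
    have hs0 : 0 ≤ Real.sqrt (h ^ 2 - u ^ 2) := Real.sqrt_nonneg _
    nlinarith

lemma G_deriv (R h : ℝ) (x : ℝ) :
    HasDerivAt (fun y => ∫ u in (0:ℝ)..y, gfun R h u) (gfun R h x) x :=
  intervalIntegral.integral_hasDerivAt_right
    ((gfun_cont R h).intervalIntegrable _ _)
    ((gfun_cont R h).stronglyMeasurableAtFilter _ _)
    (gfun_cont R h).continuousAt

lemma G_cont (R h : ℝ) : Continuous (fun y => ∫ u in (0:ℝ)..y, gfun R h u) := by
  have : Differentiable ℝ (fun y => ∫ u in (0:ℝ)..y, gfun R h u) :=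
    fun x => (G_deriv R h x).differentiableAt
  exact this.continuous

lemma G_odd (R h x : ℝ) :
    (∫ u in (0:ℝ)..(-x), gfun R h u) = -∫ u in (0:ℝ)..x, gfun R h u := by
  have := intervalIntegral.integral_comp_neg (a := (0:ℝ)) (b := x) (gfun R h)
  simp only [gfun_even, neg_zero] at this
  rw [intervalIntegral.integral_symm 0 (-x)] at this
  linarith

lemma G_const (R h x : ℝ) (hh : 0 ≤ h) (hx : h ≤ x) :
    (∫ u in (0:ℝ)..x, gfun R h u) = ∫ u in (0:ℝ)..h, gfun R h u := by
  have hzero : (∫ u in h..x, gfun R h u) = 0 := by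
    rw [intervalIntegral.integral_congr (g := fun _ => (0:ℝ))]
    · simp
    · intro u hu
      rw [uIcc_of_le hx] at hu
      exact gfun_zero R h u (by nlinarith [hu.1])
  have := intervalIntegral.integral_add_adjacent_intervals (a := (0:ℝ)) (b := h) (c := x)
    ((gfun_cont R h).intervalIntegrable (μ := volume) _ _)
    ((gfun_cont R h).intervalIntegrable (μ := volume) _ _)
  rw [hzero] at this; linarith [this]

lemma G_at_h (R h : ℝ) (hh : 0 ≤ h) :
    (∫ u in (0:ℝ)..h, gfun R h u) = Real.pi * R * h ^ 2 / 2 - 2 * h ^ 3 / 3 := by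
  unfold gfun
  rw [intervalIntegral.integral_sub (f := fun u => 2 * R * Real.sqrt (h ^ 2 - u ^ 2))
      (g := fun u => max (h ^ 2 - u ^ 2) 0)
      ((continuous_const.mul (continuous_const.sub (continuous_pow 2)).sqrt).intervalIntegrable _ _)
      (((continuous_const.sub (continuous_pow 2)).max continuous_const).intervalIntegrable _ _),
    intervalIntegral.integral_const_mul, myint_sqrt h hh]
  have : (∫ u in (0:ℝ)..h, max (h ^ 2 - u ^ 2) 0) = ∫ u in (0:ℝ)..h, (h ^ 2 - u ^ 2) := by
    apply intervalIntegral.integral_congr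
    intro u hu
    rw [uIcc_of_le hh] at hu
    exact max_eq_left (by nlinarith [hu.1, hu.2])
  rw [this, intervalIntegral.integral_sub ((continuous_const).intervalIntegrable _ _)
      ((continuous_pow 2).intervalIntegrable _ _)]
  simp [integral_pow]
  ring

lemma G_xg (R h : ℝ) (hh : 0 ≤ h) :
    (∫ x in (0:ℝ)..h, gfun R h x * x) = 2 * R * h ^ 3 / 3 - h ^ 4 / 4 := by
  have : ∀ x : ℝ, gfun R h x * x
      = 2 * R * (x * Real.sqrt (h ^ 2 - x ^ 2)) - max (h ^ 2 - x ^ 2) 0 * x := by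
    intro x; unfold gfun; ring
  simp_rw [this]
  have hi1 : IntervalIntegrable (fun x : ℝ => 2 * R * (x * Real.sqrt (h ^ 2 - x ^ 2)))
      volume 0 h := (by fun_prop : Continuous fun x : ℝ =>
        2 * R * (x * Real.sqrt (h ^ 2 - x ^ 2))).intervalIntegrable _ _
  have hi2 : IntervalIntegrable (fun x : ℝ => max (h ^ 2 - x ^ 2) 0 * x) volume 0 h :=
    (by fun_prop : Continuous fun x : ℝ => max (h ^ 2 - x ^ 2) 0 * x).intervalIntegrable _ _
  rw [intervalIntegral.integral_sub hi1 hi2,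
    intervalIntegral.integral_const_mul, myint_xsqrt h hh]
  have : (∫ x in (0:ℝ)..h, max (h ^ 2 - x ^ 2) 0 * x)
      = ∫ x in (0:ℝ)..h, (h ^ 2 * x - x ^ 3) := by
    apply intervalIntegral.integral_congr
    intro u hu
    rw [uIcc_of_le hh] at hu
    show max (h ^ 2 - u ^ 2) 0 * u = h ^ 2 * u - u ^ 3
    rw [max_eq_left (by nlinarith [hu.1, hu.2])]; ring
  rw [this]
  have hpoly : (∫ x in (0:ℝ)..h, (h ^ 2 * x - x ^ 3)) = h ^ 4 / 4 := by
    rw [intervalIntegral.integral_sub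
        ((by fun_prop : Continuous fun x : ℝ => h ^ 2 * x).intervalIntegrable _ _)
        ((continuous_pow 3).intervalIntegrable _ _),
      intervalIntegral.integral_const_mul]
    simp [integral_id, integral_pow]; ring
  rw [hpoly]; ring

lemma conv_eval (R h : ℝ) (hh : 0 ≤ h) (hhR : h ≤ R) :
    ∫ x in (0:ℝ)..R, (∫ u in (x - R)..x, gfun R h u)
      = Real.pi * R ^ 2 * h ^ 2 - 8 * R * h ^ 3 / 3 + h ^ 4 / 2 := by
  set G : ℝ → ℝ := fun y => ∫ u in (0:ℝ)..y, gfun R h u with hG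
  have hR0 : (0:ℝ) ≤ R := le_trans hh hhR
  have hsplit : ∀ x : ℝ, (∫ u in (x - R)..x, gfun R h u) = G x - G (x - R) := by
    intro x
    rw [← intervalIntegral.integral_interval_sub_left
      ((gfun_cont R h).intervalIntegrable (μ := volume) _ _)
      ((gfun_cont R h).intervalIntegrable (μ := volume) _ _)]
  simp_rw [hsplit]
  have hgint : IntervalIntegrable (fun x => G (x - R)) volume 0 R :=
    ((G_cont R h).comp (continuous_sub_right R)).intervalIntegrable _ _
  rw [intervalIntegral.integral_sub ((G_cont R h).intervalIntegrable _ _) hgint]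
  have h2 : (∫ x in (0:ℝ)..R, G (x - R)) = -∫ x in (0:ℝ)..R, G x := by
    rw [intervalIntegral.integral_comp_sub_right (f := G) R]
    have hneg := intervalIntegral.integral_comp_neg (a := (0:ℝ)) (b := R) G
    have : ∀ x : ℝ, G (-x) = -G x := fun x => G_odd R h x
    simp_rw [this] at hneg
    rw [intervalIntegral.integral_neg] at hneg
    norm_num at hneg ⊢
    linarith [hneg]
  rw [h2]
  have h3 : (∫ x in (0:ℝ)..R, G x) = (∫ x in (0:ℝ)..h, G x) + ∫ x in h..R, G x :=
    (intervalIntegral.integral_add_adjacent_intervals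
      ((G_cont R h).intervalIntegrable _ _) ((G_cont R h).intervalIntegrable _ _)).symm
  have h4 : (∫ x in h..R, G x) = (R - h) * G h := by
    rw [intervalIntegral.integral_congr (g := fun _ => G h), intervalIntegral.integral_const,
      smul_eq_mul]
    intro x hx
    rw [uIcc_of_le hhR] at hx
    exact G_const R h x hh hx.1
  have h5 : (∫ x in (0:ℝ)..h, G x) = G h * h - ∫ x in (0:ℝ)..h, gfun R h x * x := by
    have := intervalIntegral.integral_mul_deriv_eq_deriv_mul
      (u := G) (u' := gfun R h) (v := fun x => x) (v' := fun _ => 1)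
      (fun x _ => G_deriv R h x) (fun x _ => hasDerivAt_id x)
      ((gfun_cont R h).intervalIntegrable _ _)
      (continuous_const.intervalIntegrable _ _) (a := 0) (b := h)
    simp only [mul_one] at this
    rw [this]
    have hG0 : G 0 = 0 := intervalIntegral.integral_same
    rw [hG0]; ring
  rw [h3, h4, h5, G_xg R h hh]
  have h6 : G h = Real.pi * R * h ^ 2 / 2 - 2 * h ^ 3 / 3 := G_at_h R h hh
  rw [h6]; ring


lemma slice1 (R s y1 : ℝ) (hs0 : 0 ≤ s) (hy : y1 ∈ Icc (0:ℝ) R) :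
    volume {y2 : ℝ | y2 ∈ Icc (0:ℝ) R ∧ (y1 - y2) ^ 2 ≤ s ^ 2}
      = ENNReal.ofReal (min (y1 + s) R - max (y1 - s) 0) := by
  have hset : {y2 : ℝ | y2 ∈ Icc (0:ℝ) R ∧ (y1 - y2) ^ 2 ≤ s ^ 2}
      = Icc (max (y1 - s) 0) (min (y1 + s) R) := by
    ext y2
    simp only [mem_setOf_eq, mem_Icc, max_le_iff, le_min_iff]
    constructor
    · rintro ⟨⟨h1, h2⟩, h3⟩
      refine ⟨⟨by nlinarith, h1⟩, by nlinarith, h2⟩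
    · rintro ⟨⟨h1, h2⟩, h3, h4⟩
      exact ⟨⟨h2, h4⟩, by nlinarith⟩
  rw [hset, Real.volume_Icc]

lemma min_max_int (R s : ℝ) (hR : 0 < R) (hs0 : 0 ≤ s) (hsR : s ≤ R) :
    ∫ y in (0:ℝ)..R, (min (y + s) R - max (y - s) 0) = 2 * R * s - s ^ 2 := by
  have hcmin : Continuous fun y : ℝ => min (y + s) R := by fun_prop
  have hcmax : Continuous fun y : ℝ => max (y - s) 0 := by fun_prop
  rw [intervalIntegral.integral_sub (hcmin.intervalIntegrable _ _)
    (hcmax.intervalIntegrable _ _)]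
  have hmin : (∫ y in (0:ℝ)..R, min (y + s) R) = (R ^ 2 - s ^ 2) / 2 + s * R := by
    rw [← intervalIntegral.integral_add_adjacent_intervals (a := (0:ℝ)) (b := R - s) (c := R)
      (hcmin.intervalIntegrable _ _) (hcmin.intervalIntegrable _ _)]
    have h1 : (∫ y in (0:ℝ)..(R - s), min (y + s) R) = ∫ y in (0:ℝ)..(R - s), (y + s) := by
      apply intervalIntegral.integral_congr
      intro y hy
      rw [uIcc_of_le (by linarith)] at hy
      exact min_eq_left (by linarith [hy.2])
    have h2 : (∫ y in (R - s)..R, min (y + s) R) = ∫ y in (R - s)..R, (R : ℝ) := by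
      apply intervalIntegral.integral_congr
      intro y hy
      rw [uIcc_of_le (by linarith)] at hy
      exact min_eq_right (by linarith [hy.1])
    have hid : IntervalIntegrable (fun y : ℝ => y) volume 0 (R - s) :=
      continuous_id.intervalIntegrable _ _
    rw [h1, h2, intervalIntegral.integral_add hid (continuous_const.intervalIntegrable _ _)]
    simp [integral_id]
    ring
  have hmax : (∫ y in (0:ℝ)..R, max (y - s) 0) = (R - s) ^ 2 / 2 := by
    rw [← intervalIntegral.integral_add_adjacent_intervals (a := (0:ℝ)) (b := s) (c := R)
      (hcmax.intervalIntegrable _ _) (hcmax.intervalIntegrable _ _)]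
    have h1 : (∫ y in (0:ℝ)..s, max (y - s) 0) = ∫ y in (0:ℝ)..s, (0:ℝ) := by
      apply intervalIntegral.integral_congr
      intro y hy
      rw [uIcc_of_le hs0] at hy
      exact max_eq_right (by linarith [hy.2])
    have h2 : (∫ y in s..R, max (y - s) 0) = ∫ y in s..R, (y - s) := by
      apply intervalIntegral.integral_congr
      intro y hy
      rw [uIcc_of_le hsR] at hy
      exact max_eq_left (by linarith [hy.1])
    have hid : IntervalIntegrable (fun y : ℝ => y) volume s R :=
      continuous_id.intervalIntegrable _ _
    rw [h1, h2, intervalIntegral.integral_sub hid (continuous_const.intervalIntegrable _ _)]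
    simp [integral_id]
    ring
  rw [hmin, hmax]; ring

lemma slice2 (R s : ℝ) (hR : 0 < R) (hs0 : 0 ≤ s) (hsR : s ≤ R) :
    volume {q : ℝ × ℝ | (q.1 ∈ Icc (0:ℝ) R ∧ q.2 ∈ Icc (0:ℝ) R) ∧ (q.1 - q.2) ^ 2 ≤ s ^ 2}
      = ENNReal.ofReal (2 * R * s - s ^ 2) := by
  have hmeas : MeasurableSet
      {q : ℝ × ℝ | (q.1 ∈ Icc (0:ℝ) R ∧ q.2 ∈ Icc (0:ℝ) R) ∧ (q.1 - q.2) ^ 2 ≤ s ^ 2} := by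
    apply MeasurableSet.inter
    · exact (measurableSet_Icc.preimage measurable_fst).inter
        (measurableSet_Icc.preimage measurable_snd)
    · exact measurableSet_le ((measurable_fst.sub measurable_snd).pow_const 2) measurable_const
  rw [Measure.volume_eq_prod, Measure.prod_apply hmeas]
  have hfun : ∀ y1 : ℝ,
      volume (Prod.mk y1 ⁻¹' {q : ℝ × ℝ | (q.1 ∈ Icc (0:ℝ) R ∧ q.2 ∈ Icc (0:ℝ) R) ∧
        (q.1 - q.2) ^ 2 ≤ s ^ 2})
      = (Icc (0:ℝ) R).indicator
          (fun y1 => ENNReal.ofReal (min (y1 + s) R - max (y1 - s) 0)) y1 := by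
    intro y1
    by_cases hy : y1 ∈ Icc (0:ℝ) R
    · rw [indicator_of_mem hy]
      have hset : Prod.mk y1 ⁻¹' {q : ℝ × ℝ | (q.1 ∈ Icc (0:ℝ) R ∧ q.2 ∈ Icc (0:ℝ) R) ∧
          (q.1 - q.2) ^ 2 ≤ s ^ 2} = {y2 : ℝ | y2 ∈ Icc (0:ℝ) R ∧ (y1 - y2) ^ 2 ≤ s ^ 2} := by
        ext y2
        simp only [mem_preimage, mem_setOf_eq]
        constructor
        · rintro ⟨⟨_, h2⟩, h3⟩; exact ⟨h2, h3⟩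
        · rintro ⟨h2, h3⟩; exact ⟨⟨hy, h2⟩, h3⟩
      rw [hset, slice1 R s y1 hs0 hy]
    · rw [indicator_of_notMem hy]
      have : Prod.mk y1 ⁻¹' {q : ℝ × ℝ | (q.1 ∈ Icc (0:ℝ) R ∧ q.2 ∈ Icc (0:ℝ) R) ∧
          (q.1 - q.2) ^ 2 ≤ s ^ 2} = ∅ := by
        ext y2
        simp only [mem_preimage, mem_setOf_eq, mem_empty_iff_false, iff_false]
        rintro ⟨⟨h1, _⟩, _⟩; exact hy h1
      rw [this]; simp
  rw [lintegral_congr hfun, lintegral_indicator measurableSet_Icc]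
  have hcont : Continuous fun y1 : ℝ => min (y1 + s) R - max (y1 - s) 0 := by fun_prop
  have hint : IntegrableOn (fun y1 : ℝ => min (y1 + s) R - max (y1 - s) 0)
      (Icc (0:ℝ) R) volume := hcont.integrableOn_Icc
  have hnn : 0 ≤ᵐ[volume.restrict (Icc (0:ℝ) R)]
      fun y1 : ℝ => min (y1 + s) R - max (y1 - s) 0 := by
    apply ae_restrict_of_forall_mem measurableSet_Icc
    intro y1 hy
    have : max (y1 - s) 0 ≤ min (y1 + s) R :=
      max_le (le_min (by linarith) (by linarith [hy.2]))
        (le_min (by linarith [hy.1]) (by linarith))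
    simpa using sub_nonneg.mpr this
  rw [← MeasureTheory.ofReal_integral_eq_lintegral_ofReal hint hnn,
    MeasureTheory.integral_Icc_eq_integral_Ioc,
    ← intervalIntegral.integral_of_le (by linarith : (0:ℝ) ≤ R),
    min_max_int R s hR hs0 hsR]

lemma slice2c (R h c : ℝ) (hR : 0 < R) (hh : 0 ≤ h) (hhR : h ≤ R) (hc : c ≤ h ^ 2) :
    volume {q : ℝ × ℝ | (q.1 ∈ Icc (0:ℝ) R ∧ q.2 ∈ Icc (0:ℝ) R) ∧ (q.1 - q.2) ^ 2 ≤ c}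
      = ENNReal.ofReal (2 * R * Real.sqrt c - max c 0) := by
  rcases lt_or_ge c 0 with hneg | hpos
  · have hset : {q : ℝ × ℝ | (q.1 ∈ Icc (0:ℝ) R ∧ q.2 ∈ Icc (0:ℝ) R) ∧ (q.1 - q.2) ^ 2 ≤ c}
        = ∅ := by
      ext q
      simp only [mem_setOf_eq, mem_empty_iff_false, iff_false]
      rintro ⟨-, h2⟩
      nlinarith [sq_nonneg (q.1 - q.2)]
    rw [hset, Real.sqrt_eq_zero'.mpr hneg.le, max_eq_right hneg.le]
    simp
  · set s := Real.sqrt c with hs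
    have hs2 : s ^ 2 = c := Real.sq_sqrt hpos
    have hsle : s ≤ R := by
      calc s ≤ Real.sqrt (h ^ 2) := Real.sqrt_le_sqrt hc
        _ = h := Real.sqrt_sq hh
        _ ≤ R := hhR
    rw [← hs2, max_eq_left (hs2 ▸ sq_nonneg s)]
    exact slice2 R s hR (Real.sqrt_nonneg c) hsle

lemma mpT : MeasurePreserving
    (fun p : (ℝ × ℝ) × (ℝ × ℝ) => ((p.1.1, p.2.1), (p.1.2, p.2.2)))
    volume volume := by
  have h1 : MeasurePreserving (MeasurableEquiv.prodAssoc : ((ℝ × ℝ) × (ℝ × ℝ)) ≃ᵐ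
      (ℝ × ℝ × (ℝ × ℝ))) volume volume := volume_preserving_prodAssoc
  have hinner : MeasurePreserving
      (fun q : ℝ × (ℝ × ℝ) => (q.2.1, (q.1, q.2.2))) volume volume := by
    have ha : MeasurePreserving (MeasurableEquiv.prodAssoc.symm : (ℝ × (ℝ × ℝ)) ≃ᵐ
        ((ℝ × ℝ) × ℝ)) volume volume :=
      volume_preserving_prodAssoc.symm MeasurableEquiv.prodAssoc
    have hb : MeasurePreserving (Prod.map (Prod.swap : ℝ × ℝ → ℝ × ℝ) (id : ℝ → ℝ))
        volume volume := by
      rw [Measure.volume_eq_prod]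
      exact (Measure.measurePreserving_swap).prod (MeasurePreserving.id volume)
    have hc : MeasurePreserving (MeasurableEquiv.prodAssoc : ((ℝ × ℝ) × ℝ) ≃ᵐ
        (ℝ × (ℝ × ℝ))) volume volume := volume_preserving_prodAssoc
    have := (hc.comp hb).comp ha
    convert this using 1
    rfl
  have houter : MeasurePreserving
      (Prod.map (id : ℝ → ℝ) (fun q : ℝ × (ℝ × ℝ) => (q.2.1, (q.1, q.2.2))))
      volume volume := by
    rw [Measure.volume_eq_prod]
    exact (MeasurePreserving.id volume).prod hinner
  have h3 : MeasurePreserving (MeasurableEquiv.prodAssoc.symm : (ℝ × (ℝ × (ℝ × ℝ))) ≃ᵐ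
      ((ℝ × ℝ) × (ℝ × ℝ))) volume volume :=
    volume_preserving_prodAssoc.symm MeasurableEquiv.prodAssoc
  have := (h3.comp houter).comp h1
  convert this using 1
  rfl

lemma vol4 (R h : ℝ) (hR : 0 < R) (hh : 0 ≤ h) (hhR : h ≤ R) :
    volume ({p : (ℝ × ℝ) × (ℝ × ℝ) |
        Real.sqrt ((p.1.1 - p.2.1) ^ 2 + (p.1.2 - p.2.2) ^ 2) ≤ h} ∩
      ((Icc (0:ℝ) R ×ˢ Icc (0:ℝ) R) ×ˢ (Icc (0:ℝ) R ×ˢ Icc (0:ℝ) R)))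
      = ENNReal.ofReal (Real.pi * R ^ 2 * h ^ 2 - 8 * R * h ^ 3 / 3 + h ^ 4 / 2) := by
  set S : Set ((ℝ × ℝ) × (ℝ × ℝ)) := {q | (q.1.1 ∈ Icc (0:ℝ) R ∧ q.1.2 ∈ Icc (0:ℝ) R) ∧
    ((q.2.1 ∈ Icc (0:ℝ) R ∧ q.2.2 ∈ Icc (0:ℝ) R) ∧
      (q.2.1 - q.2.2) ^ 2 ≤ h ^ 2 - (q.1.1 - q.1.2) ^ 2)} with hS
  have hSmeas : MeasurableSet S := by
    apply MeasurableSet.inter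
    · exact (measurableSet_Icc.preimage (measurable_fst.fst)).inter
        (measurableSet_Icc.preimage (measurable_fst.snd))
    · apply MeasurableSet.inter
      · exact (measurableSet_Icc.preimage (measurable_snd.fst)).inter
          (measurableSet_Icc.preimage (measurable_snd.snd))
      · exact measurableSet_le
          ((measurable_snd.fst.sub measurable_snd.snd).pow_const 2)
          ((measurable_const.sub ((measurable_fst.fst.sub measurable_fst.snd).pow_const 2)))
  have hpre : {p : (ℝ × ℝ) × (ℝ × ℝ) |
        Real.sqrt ((p.1.1 - p.2.1) ^ 2 + (p.1.2 - p.2.2) ^ 2) ≤ h} ∩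
      ((Icc (0:ℝ) R ×ˢ Icc (0:ℝ) R) ×ˢ (Icc (0:ℝ) R ×ˢ Icc (0:ℝ) R))
      = (fun p : (ℝ × ℝ) × (ℝ × ℝ) => ((p.1.1, p.2.1), (p.1.2, p.2.2))) ⁻¹' S := by
    ext p
    simp only [hS, mem_inter_iff, mem_setOf_eq, mem_preimage, mem_prod]
    constructor
    · rintro ⟨hsqrt, ⟨hx1, hy1⟩, hx2, hy2⟩
      have harg : (0:ℝ) ≤ (p.1.1 - p.2.1) ^ 2 + (p.1.2 - p.2.2) ^ 2 := by positivity
      have := Real.sq_sqrt harg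
      refine ⟨⟨hx1, hx2⟩, ⟨hy1, hy2⟩, ?_⟩
      nlinarith [Real.sqrt_nonneg ((p.1.1 - p.2.1) ^ 2 + (p.1.2 - p.2.2) ^ 2)]
    · rintro ⟨⟨hx1, hx2⟩, ⟨hy1, hy2⟩, hle⟩
      refine ⟨?_, ⟨hx1, hy1⟩, hx2, hy2⟩
      calc Real.sqrt ((p.1.1 - p.2.1) ^ 2 + (p.1.2 - p.2.2) ^ 2)
          ≤ Real.sqrt (h ^ 2) := Real.sqrt_le_sqrt (by linarith)
        _ = h := Real.sqrt_sq hh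
  rw [hpre, mpT.measure_preimage hSmeas.nullMeasurableSet]
  rw [Measure.volume_eq_prod, Measure.prod_apply hSmeas]
  have hfun : ∀ x : ℝ × ℝ, volume (Prod.mk x ⁻¹' S)
      = (Icc (0:ℝ) R ×ˢ Icc (0:ℝ) R).indicator
          (fun x => ENNReal.ofReal (gfun R h (x.1 - x.2))) x := by
    intro x
    by_cases hx : x ∈ Icc (0:ℝ) R ×ˢ Icc (0:ℝ) R
    · rw [indicator_of_mem hx]
      have hset : Prod.mk x ⁻¹' S = {q : ℝ × ℝ | (q.1 ∈ Icc (0:ℝ) R ∧ q.2 ∈ Icc (0:ℝ) R) ∧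
          (q.1 - q.2) ^ 2 ≤ h ^ 2 - (x.1 - x.2) ^ 2} := by
        ext y
        simp only [hS, mem_preimage, mem_setOf_eq]
        constructor
        · rintro ⟨-, hy⟩; exact hy
        · intro hy; exact ⟨⟨hx.1, hx.2⟩, hy⟩
      rw [hset, slice2c R h _ hR hh hhR (by nlinarith [sq_nonneg (x.1 - x.2)])]
      rfl
    · rw [indicator_of_notMem hx]
      have hset : Prod.mk x ⁻¹' S = ∅ := by
        ext y
        simp only [hS, mem_preimage, mem_setOf_eq, mem_empty_iff_false, iff_false]
        rintro ⟨hmem, -⟩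
        exact hx (mem_prod.mpr hmem)
      rw [hset]; simp
  rw [lintegral_congr hfun, lintegral_indicator (measurableSet_Icc.prod measurableSet_Icc)]
  have hgc2 : Continuous fun x : ℝ × ℝ => gfun R h (x.1 - x.2) :=
    (gfun_cont R h).comp (continuous_fst.sub continuous_snd)
  have hint : IntegrableOn (fun x : ℝ × ℝ => gfun R h (x.1 - x.2))
      (Icc (0:ℝ) R ×ˢ Icc (0:ℝ) R) volume :=
    hgc2.continuousOn.integrableOn_compact (isCompact_Icc.prod isCompact_Icc)
  have hnn : 0 ≤ᵐ[volume.restrict (Icc (0:ℝ) R ×ˢ Icc (0:ℝ) R)]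
      fun x : ℝ × ℝ => gfun R h (x.1 - x.2) := by
    apply ae_restrict_of_forall_mem (measurableSet_Icc.prod measurableSet_Icc)
    intro x _
    simpa using gfun_nonneg R h (x.1 - x.2) hh hhR
  rw [← MeasureTheory.ofReal_integral_eq_lintegral_ofReal hint hnn]
  congr 1
  rw [Measure.volume_eq_prod] at hint ⊢
  rw [MeasureTheory.setIntegral_prod _ hint]
  have hinner : ∀ x ∈ Icc (0:ℝ) R,
      (∫ y in Icc (0:ℝ) R, gfun R h (x - y)) = ∫ u in (x - R)..x, gfun R h u := by
    intro x _
    rw [MeasureTheory.integral_Icc_eq_integral_Ioc,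
      ← intervalIntegral.integral_of_le hR.le,
      intervalIntegral.integral_comp_sub_left (gfun R h) x]
    norm_num
  rw [MeasureTheory.setIntegral_congr_fun measurableSet_Icc hinner,
    MeasureTheory.integral_Icc_eq_integral_Ioc,
    ← intervalIntegral.integral_of_le hR.le]
  exact conv_eval R h hh hhR

end DistDensitySquare

open DistDensitySquare in
/-- The density of the distance between two independent uniform points in a square
of side `R` equals `2πh/R² - 8h²/R³ + 2h³/R⁴` for `0 ≤ h ≤ R`: it is nonnegative
there and the CDF of the distance is its integral. -/
theorem distance_density_square (R : ℝ) (hR : 0 < R)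
    (μ : Measure ((ℝ × ℝ) × (ℝ × ℝ)))
    (hμ : μ = (ENNReal.ofReal (R ^ 4))⁻¹ •
      (volume.restrict ((Set.Icc (0 : ℝ) R ×ˢ Set.Icc (0 : ℝ) R) ×ˢ
        (Set.Icc (0 : ℝ) R ×ˢ Set.Icc (0 : ℝ) R)))) :
    ∀ h : ℝ, 0 ≤ h → h ≤ R →
      (0 ≤ 2 * Real.pi * h / R ^ 2 - 8 * h ^ 2 / R ^ 3 + 2 * h ^ 3 / R ^ 4) ∧
      μ {p | Real.sqrt ((p.1.1 - p.2.1) ^ 2 + (p.1.2 - p.2.2) ^ 2) ≤ h} =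
        ENNReal.ofReal (∫ t in (0 : ℝ)..h,
          (2 * Real.pi * t / R ^ 2 - 8 * t ^ 2 / R ^ 3 + 2 * t ^ 3 / R ^ 4)) := by
  intro h hh hhR
  constructor
  · have he : 2 * Real.pi * h / R ^ 2 - 8 * h ^ 2 / R ^ 3 + 2 * h ^ 3 / R ^ 4
        = (2 * Real.pi * h * R ^ 2 - 8 * h ^ 2 * R + 2 * h ^ 3) / R ^ 4 := by
      field_simp
    rw [he]
    apply div_nonneg _ (by positivity)
    have k1 : 0 ≤ h * ((R - h) * (3 * R - h)) :=
      mul_nonneg hh (mul_nonneg (by linarith) (by linarith))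
    have k2 : 0 ≤ (Real.pi - 3) * (h * R ^ 2) :=
      mul_nonneg (by linarith [Real.pi_gt_three]) (by positivity)
    nlinarith [k1, k2]
  · have hAmeas : MeasurableSet {p : (ℝ × ℝ) × (ℝ × ℝ) |
        Real.sqrt ((p.1.1 - p.2.1) ^ 2 + (p.1.2 - p.2.2) ^ 2) ≤ h} := by
      apply measurableSet_le _ measurable_const
      apply Measurable.sqrt
      exact ((measurable_fst.fst.sub measurable_snd.fst).pow_const 2).add
        ((measurable_fst.snd.sub measurable_snd.snd).pow_const 2)
    rw [hμ, Measure.smul_apply, Measure.restrict_apply hAmeas,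
      vol4 R h hR hh hhR]
    have hrhs : (∫ t in (0:ℝ)..h,
        (2 * Real.pi * t / R ^ 2 - 8 * t ^ 2 / R ^ 3 + 2 * t ^ 3 / R ^ 4))
        = (Real.pi * R ^ 2 * h ^ 2 - 8 * R * h ^ 3 / 3 + h ^ 4 / 2) / R ^ 4 := by
      have hfe : ∀ t : ℝ, 2 * Real.pi * t / R ^ 2 - 8 * t ^ 2 / R ^ 3 + 2 * t ^ 3 / R ^ 4
          = (2 * Real.pi / R ^ 2) * t - (8 / R ^ 3) * t ^ 2 + (2 / R ^ 4) * t ^ 3 := by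
        intro t; ring
      simp_rw [hfe]
      have h1 : IntervalIntegrable (fun t : ℝ => (2 * Real.pi / R ^ 2) * t) volume 0 h := by
        apply Continuous.intervalIntegrable; fun_prop
      have h2 : IntervalIntegrable (fun t : ℝ => (8 / R ^ 3) * t ^ 2) volume 0 h := by
        apply Continuous.intervalIntegrable; fun_prop
      have h3 : IntervalIntegrable (fun t : ℝ => (2 / R ^ 4) * t ^ 3) volume 0 h := by
        apply Continuous.intervalIntegrable; fun_prop
      rw [intervalIntegral.integral_add (h1.sub h2) h3, intervalIntegral.integral_sub h1 h2,
        intervalIntegral.integral_const_mul, intervalIntegral.integral_const_mul,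
        intervalIntegral.integral_const_mul, integral_id, integral_pow, integral_pow]
      field_simp
      ring
    rw [hrhs]
    have : ENNReal.ofReal ((Real.pi * R ^ 2 * h ^ 2 - 8 * R * h ^ 3 / 3 + h ^ 4 / 2) / R ^ 4)
        = (ENNReal.ofReal (R ^ 4))⁻¹ *
          ENNReal.ofReal (Real.pi * R ^ 2 * h ^ 2 - 8 * R * h ^ 3 / 3 + h ^ 4 / 2) := by
      rw [ENNReal.ofReal_div_of_pos (by positivity), ENNReal.div_eq_inv_mul]
    rw [smul_eq_mul, ← this]
end
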